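/- Let p be a strongly irreducible ℤ^d-invariant transition kernel on ℤ^d × {1,…,N} which is finitely supported. Then all entries of F(u) are finite for every u ∈ ℝ^d, and if λ : ℝ^d → ℝ and C : ℝ^d → ℝ^N are functions such that for every u the vector C(u) has all entries positive and F(u)C(u) = λ(u)C(u), then the set D = {u ∈ ℝ^d : λ(u) ≤ 1} is compact. -/

import Mathlib

open scoped ENNReal
open Filter Topology

noncomputable section

/-- Convolution powers of a `ℤ^d`-invariant kernel on `ℤ^d × {1,…,N}`, where
`q z k j = p_{k,j}(0,z)`; `p^{(n)}_{k,j}(x,y)` is `convPow q n (y-x) k j`. -/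
def convPow {d N : ℕ} (q : (Fin d → ℤ) → Fin N → Fin N → ℝ≥0∞) :
    ℕ → (Fin d → ℤ) → Fin N → Fin N → ℝ≥0∞
  | 0 => fun z k j => if z = 0 ∧ k = j then 1 else 0
  | n + 1 => fun z k j => ∑' w : Fin d → ℤ, ∑ l : Fin N, q w k l * convPow q n (z - w) l j

/-- Strong irreducibility: for all `x, y, k, j` there is `n₀` with `p^{(n)}_{k,j}(x,y) > 0` for
all `n ≥ n₀`. -/
def StronglyIrreducibleKer {d N : ℕ} (q : (Fin d → ℤ) → Fin N → Fin N → ℝ≥0∞) : Prop :=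
  ∀ (z : Fin d → ℤ) (k j : Fin N), ∃ n₀ : ℕ, ∀ n ≥ n₀, 0 < convPow q n z k j

/-- (Weak) irreducibility: for all `x, y, k, j` there is `n` with `p^{(n)}_{k,j}(x,y) > 0`. -/
def IrreducibleKer {d N : ℕ} (q : (Fin d → ℤ) → Fin N → Fin N → ℝ≥0∞) : Prop :=
  ∀ (z : Fin d → ℤ) (k j : Fin N), ∃ n : ℕ, 0 < convPow q n z k j

/-- Finitely supported kernel: `{(y,j) : p_{k,j}(0,y) > 0}` is finite for each `k`. -/
def FinSuppKer {d N : ℕ} (q : (Fin d → ℤ) → Fin N → Fin N → ℝ≥0∞) : Prop :=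
  ∀ k : Fin N, {zj : (Fin d → ℤ) × Fin N | q zj.1 k zj.2 ≠ 0}.Finite

/-- `u · z` for `u ∈ ℝ^d`, `z ∈ ℤ^d`. -/
def dotZ {d : ℕ} (u : Fin d → ℝ) (z : Fin d → ℤ) : ℝ := ∑ i, u i * (z i : ℝ)

/-- The matrix `F(u)` with entries `F_{k,j}(u) = ∑_{x∈ℤ^d} p_{k,j}(0,x) e^{u·x} ∈ [0,∞]`. -/
def Fmat {d N : ℕ} (q : (Fin d → ℤ) → Fin N → Fin N → ℝ≥0∞) (u : Fin d → ℝ) :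
    Matrix (Fin N) (Fin N) ℝ≥0∞ :=
  Matrix.of fun k j => ∑' z : Fin d → ℤ, q z k j * ENNReal.ofReal (Real.exp (dotZ u z))

/-- The real matrix `F(u)` (meaningful when all entries are finite). -/
def FmatR {d N : ℕ} (q : (Fin d → ℤ) → Fin N → Fin N → ℝ≥0∞) (u : Fin d → ℝ) :
    Matrix (Fin N) (Fin N) ℝ :=
  Matrix.of fun k j => (Fmat q u k j).toReal

/-- The continuous linear map `v ↦ ∑ i, m i * v i`, i.e. the linear form with gradient `m`. -/
def dotCLM {d : ℕ} (m : Fin d → ℝ) : (Fin d → ℝ) →L[ℝ] ℝ :=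
  ∑ i, m i • (ContinuousLinearMap.proj i : (Fin d → ℝ) →L[ℝ] ℝ)

/-- The drift vector `p⃗ = ∑_{x} ∑_{k,j} ν₀(k)·x·p_{k,j}(0,x)`. -/
def driftVec {d N : ℕ} (q : (Fin d → ℤ) → Fin N → Fin N → ℝ≥0∞) (ν₀ : Fin N → ℝ) :
    Fin d → ℝ :=
  fun i => ∑' z : Fin d → ℤ, ∑ k, ∑ j, ν₀ k * (z i : ℝ) * (q z k j).toReal

/-- Euclidean norm on `ℤ^d`. -/
def eNormZ {d : ℕ} (z : Fin d → ℤ) : ℝ := Real.sqrt (∑ i, ((z i : ℝ)) ^ 2)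

/-- Euclidean norm on `ℝ^d`. -/
def eNormR {d : ℕ} (v : Fin d → ℝ) : ℝ := Real.sqrt (∑ i, (v i) ^ 2)

/-- The value of the quadratic form associated to a symmetric matrix. -/
def quadVal {d : ℕ} (M : Matrix (Fin d) (Fin d) ℝ) (v : Fin d → ℝ) : ℝ :=
  dotProduct v (M.mulVec v)

namespace Stmt4Aux

variable {d N : ℕ}

/-- exponential weight -/
def ee (u : Fin d → ℝ) (z : Fin d → ℤ) : ℝ≥0∞ := ENNReal.ofReal (Real.exp (dotZ u z))

lemma ee_ne_top (u : Fin d → ℝ) (z : Fin d → ℤ) : ee u z ≠ ⊤ := ENNReal.ofReal_ne_top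

lemma ee_pos (u : Fin d → ℝ) (z : Fin d → ℤ) : 0 < ee u z := by
  simp [ee, ENNReal.ofReal_pos, Real.exp_pos]

lemma dotZ_add (u : Fin d → ℝ) (z w : Fin d → ℤ) :
    dotZ u (z + w) = dotZ u z + dotZ u w := by
  simp [dotZ, mul_add, Finset.sum_add_distrib]

lemma dotZ_zero (u : Fin d → ℝ) : dotZ u (0 : Fin d → ℤ) = 0 := by simp [dotZ]

lemma ee_zero (u : Fin d → ℝ) : ee u (0 : Fin d → ℤ) = 1 := by
  simp [ee, dotZ_zero]

lemma ee_add (u : Fin d → ℝ) (z w : Fin d → ℤ) : ee u (z + w) = ee u z * ee u w := by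
  rw [ee, dotZ_add, Real.exp_add, ENNReal.ofReal_mul (Real.exp_nonneg _)]; rfl

variable (q : (Fin d → ℤ) → Fin N → Fin N → ℝ≥0∞)

lemma Fmat_eq_sum (hfs : FinSuppKer q) (u : Fin d → ℝ) (k j : Fin N) :
    Fmat q u k j = ∑ z ∈ ((hfs k).image Prod.fst).toFinset, q z k j * ee u z := by
  show (∑' z : Fin d → ℤ, q z k j * ENNReal.ofReal (Real.exp (dotZ u z))) = _
  refine tsum_eq_sum ?_
  intro z hz
  have hq : q z k j = 0 := by
    by_contra h
    refine hz ?_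
    rw [Set.Finite.mem_toFinset]
    exact ⟨(z, j), h, rfl⟩
  simp [hq]

lemma Fmat_ne_top (hfin : ∀ z k j, q z k j ≠ ⊤) (hfs : FinSuppKer q)
    (u : Fin d → ℝ) (k j : Fin N) : Fmat q u k j ≠ ⊤ := by
  rw [Fmat_eq_sum q hfs u k j]
  exact (ENNReal.sum_lt_top.2 fun z _ => ENNReal.mul_lt_top (hfin z k j).lt_top (ee_ne_top u z).lt_top).ne

lemma FmatR_eq_sum (hfin : ∀ z k j, q z k j ≠ ⊤) (hfs : FinSuppKer q)
    (u : Fin d → ℝ) (k j : Fin N) :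
    FmatR q u k j
      = ∑ z ∈ ((hfs k).image Prod.fst).toFinset, (q z k j).toReal * Real.exp (dotZ u z) := by
  show (Fmat q u k j).toReal = _
  rw [Fmat_eq_sum q hfs u k j, ENNReal.toReal_sum (fun z _ => ENNReal.mul_ne_top (hfin z k j) (ee_ne_top u z))]
  refine Finset.sum_congr rfl fun z _ => ?_
  rw [ENNReal.toReal_mul, ee, ENNReal.toReal_ofReal (Real.exp_nonneg _)]

lemma continuous_FmatR (hfin : ∀ z k j, q z k j ≠ ⊤) (hfs : FinSuppKer q) (k j : Fin N) :
    Continuous fun u : Fin d → ℝ => FmatR q u k j := by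
  have : (fun u : Fin d → ℝ => FmatR q u k j)
      = fun u => ∑ z ∈ ((hfs k).image Prod.fst).toFinset, (q z k j).toReal * Real.exp (dotZ u z) := by
    funext u; exact FmatR_eq_sum q hfin hfs u k j
  rw [this]
  refine continuous_finset_sum _ fun z _ => Continuous.mul continuous_const ?_
  exact Real.continuous_exp.comp (continuous_finset_sum _ fun i _ => (continuous_apply i).mul continuous_const)


/-- `Fmat` of the `n`-th convolution power. -/
def Gmat (u : Fin d → ℝ) (n : ℕ) : Matrix (Fin N) (Fin N) ℝ≥0∞ :=
  Matrix.of fun k j => ∑' z : Fin d → ℤ, convPow q n z k j * ee u z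

lemma Gmat_zero (u : Fin d → ℝ) : Gmat q u 0 = 1 := by
  ext k j
  show (∑' z : Fin d → ℤ, (if z = 0 ∧ k = j then 1 else 0) * ee u z) = (1 : Matrix (Fin N) (Fin N) ℝ≥0∞) k j
  rcases eq_or_ne k j with h | h
  · subst h
    have : ∀ z : Fin d → ℤ, (if z = 0 ∧ k = k then (1:ℝ≥0∞) else 0) * ee u z
        = if z = (0 : Fin d → ℤ) then 1 else 0 := by
      intro z
      rcases eq_or_ne z 0 with hz | hz
      · subst hz; simp [ee_zero]
      · simp [hz]
    rw [tsum_congr this, tsum_ite_eq]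
    simp [Matrix.one_apply]
  · have : ∀ z : Fin d → ℤ, (if z = 0 ∧ k = j then (1:ℝ≥0∞) else 0) * ee u z = 0 := by
      intro z; simp [h]
    rw [tsum_congr this]
    simp [Matrix.one_apply, h]

lemma reindex_key (u : Fin d → ℝ) (n : ℕ) (w : Fin d → ℤ) (l j : Fin N) :
    (∑' z : Fin d → ℤ, convPow q n (z - w) l j * ee u z)
    = (∑' z : Fin d → ℤ, convPow q n z l j * ee u z) * ee u w := by
  rw [← Equiv.tsum_eq (Equiv.addRight w) (fun z => convPow q n (z - w) l j * ee u z)]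
  rw [← ENNReal.tsum_mul_right]
  refine tsum_congr fun z => ?_
  have h1 : (Equiv.addRight w) z = z + w := rfl
  rw [h1, add_sub_cancel_right, ee_add, mul_assoc]

lemma Gmat_succ (u : Fin d → ℝ) (n : ℕ) :
    Gmat q u (n + 1) = Fmat q u * Gmat q u n := by
  ext k j
  show (∑' z : Fin d → ℤ, (∑' w : Fin d → ℤ, ∑ l : Fin N, q w k l * convPow q n (z - w) l j) * ee u z) = _
  have step1 : ∀ z : Fin d → ℤ,
      (∑' w : Fin d → ℤ, ∑ l : Fin N, q w k l * convPow q n (z - w) l j) * ee u z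
      = ∑' w : Fin d → ℤ, ∑ l : Fin N, q w k l * (convPow q n (z - w) l j * ee u z) := by
    intro z
    rw [← ENNReal.tsum_mul_right]
    exact tsum_congr fun w => by rw [Finset.sum_mul]; exact Finset.sum_congr rfl fun l _ => mul_assoc _ _ _
  rw [tsum_congr step1, ENNReal.tsum_comm]
  have step2 : ∀ w : Fin d → ℤ,
      (∑' z : Fin d → ℤ, ∑ l : Fin N, q w k l * (convPow q n (z - w) l j * ee u z))
      = ∑ l : Fin N, q w k l * ((∑' z : Fin d → ℤ, convPow q n z l j * ee u z) * ee u w) := by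
    intro w
    rw [Summable.tsum_finsetSum (fun l _ => ENNReal.summable)]
    refine Finset.sum_congr rfl fun l _ => ?_
    rw [ENNReal.tsum_mul_left, reindex_key]
  rw [tsum_congr step2, Summable.tsum_finsetSum (fun l _ => ENNReal.summable)]
  rw [Matrix.mul_apply]
  refine Finset.sum_congr rfl fun l _ => ?_
  have : ∀ w : Fin d → ℤ, q w k l * ((∑' z : Fin d → ℤ, convPow q n z l j * ee u z) * ee u w)
      = (q w k l * ee u w) * (∑' z : Fin d → ℤ, convPow q n z l j * ee u z) := by
    intro w; ring
  rw [tsum_congr this, ENNReal.tsum_mul_right]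
  rfl

lemma Gmat_eq_pow (u : Fin d → ℝ) (n : ℕ) : Gmat q u n = Fmat q u ^ n := by
  induction n with
  | zero => simpa using Gmat_zero q u
  | succ n ih => rw [Gmat_succ, ih, pow_succ']


lemma pow_ne_top (hfin : ∀ z k j, q z k j ≠ ⊤) (hfs : FinSuppKer q)
    (u : Fin d → ℝ) (n : ℕ) (k j : Fin N) : (Fmat q u ^ n) k j ≠ ⊤ := by
  induction n generalizing k j with
  | zero =>
    simp only [pow_zero, Matrix.one_apply]
    split <;> simp
  | succ n ih =>
    rw [pow_succ, Matrix.mul_apply]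
    exact (ENNReal.sum_lt_top.2 fun l _ =>
      ENNReal.mul_lt_top (ih k l).lt_top (Fmat_ne_top q hfin hfs u l j).lt_top).ne

lemma FmatR_pow (hfin : ∀ z k j, q z k j ≠ ⊤) (hfs : FinSuppKer q)
    (u : Fin d → ℝ) (n : ℕ) (k j : Fin N) :
    (FmatR q u ^ n) k j = ((Fmat q u ^ n) k j).toReal := by
  induction n generalizing k j with
  | zero =>
    simp only [pow_zero, Matrix.one_apply]
    split <;> simp
  | succ n ih =>
    rw [pow_succ, pow_succ, Matrix.mul_apply, Matrix.mul_apply,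
      ENNReal.toReal_sum (fun l _ => ENNReal.mul_ne_top (pow_ne_top q hfin hfs u n k l)
        (Fmat_ne_top q hfin hfs u l j))]
    exact Finset.sum_congr rfl fun l _ => by rw [ENNReal.toReal_mul, ih]; rfl

lemma FmatR_pow_nonneg (hfin : ∀ z k j, q z k j ≠ ⊤) (hfs : FinSuppKer q)
    (u : Fin d → ℝ) (n : ℕ) (k j : Fin N) : 0 ≤ (FmatR q u ^ n) k j := by
  rw [FmatR_pow q hfin hfs]; exact ENNReal.toReal_nonneg

lemma FmatR_nonneg (u : Fin d → ℝ) (k j : Fin N) : 0 ≤ FmatR q u k j :=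
  ENNReal.toReal_nonneg

lemma convPow_le (u : Fin d → ℝ) (n : ℕ) (z : Fin d → ℤ) (k j : Fin N) :
    convPow q n z k j * ee u z ≤ (Fmat q u ^ n) k j := by
  rw [← Gmat_eq_pow]
  exact ENNReal.le_tsum z

lemma convPow_ne_top (hfin : ∀ z k j, q z k j ≠ ⊤) (hfs : FinSuppKer q)
    (n : ℕ) (z : Fin d → ℤ) (k j : Fin N) : convPow q n z k j ≠ ⊤ := by
  intro h
  have h1 := convPow_le q 0 n z k j
  rw [h, ENNReal.top_mul (ee_pos 0 z).ne'] at h1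
  exact pow_ne_top q hfin hfs 0 n k j (top_le_iff.mp h1)

/-- The key lower bound for entries of real powers. -/
lemma pow_entry_ge (hfin : ∀ z k j, q z k j ≠ ⊤) (hfs : FinSuppKer q)
    (u : Fin d → ℝ) (n : ℕ) (z : Fin d → ℤ) (k j : Fin N) :
    (convPow q n z k j).toReal * Real.exp (dotZ u z) ≤ (FmatR q u ^ n) k j := by
  rw [FmatR_pow q hfin hfs]
  have := ENNReal.toReal_mono (pow_ne_top q hfin hfs u n k j) (convPow_le q u n z k j)
  rwa [ENNReal.toReal_mul, ee, ENNReal.toReal_ofReal (Real.exp_nonneg _)] at this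


lemma eig_pow {M : Matrix (Fin N) (Fin N) ℝ} {c : Fin N → ℝ} {l : ℝ}
    (h : M.mulVec c = l • c) (n : ℕ) : (M ^ n).mulVec c = l ^ n • c := by
  induction n with
  | zero => simp
  | succ n ih =>
    rw [pow_succ, ← Matrix.mulVec_mulVec, h, Matrix.mulVec_smul, ih, smul_smul, pow_succ, mul_comm]

lemma lam_nonneg {M : Matrix (Fin N) (Fin N) ℝ} {c : Fin N → ℝ} {l : ℝ}
    (hM : ∀ k j, 0 ≤ M k j) (hc : ∀ k, 0 < c k) (h : M.mulVec c = l • c) (k : Fin N) :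
    0 ≤ l := by
  have h1 : (M.mulVec c) k = l * c k := by rw [h]; rfl
  have h2 : 0 ≤ (M.mulVec c) k := by
    rw [Matrix.mulVec, dotProduct]
    exact Finset.sum_nonneg fun j _ => mul_nonneg (hM k j) (hc j).le
  nlinarith [hc k]

lemma diag_le_lam_pow {M : Matrix (Fin N) (Fin N) ℝ} {c : Fin N → ℝ} {l : ℝ}
    (hMp : ∀ n k j, 0 ≤ (M ^ n) k j) (hc : ∀ k, 0 < c k) (h : M.mulVec c = l • c)
    (n : ℕ) (k : Fin N) : (M ^ n) k k ≤ l ^ n := by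
  have h1 : ((M ^ n).mulVec c) k = l ^ n * c k := by rw [eig_pow h]; rfl
  have h2 : (M ^ n) k k * c k ≤ ((M ^ n).mulVec c) k := by
    rw [Matrix.mulVec, dotProduct]
    exact Finset.single_le_sum (fun j _ => mul_nonneg (hMp n k j) (hc j).le)
      (Finset.mem_univ k)
  have := hc k
  rw [h1] at h2
  exact le_of_mul_le_mul_right h2 this

lemma lam_le_one {M : Matrix (Fin N) (Fin N) ℝ} {c : Fin N → ℝ} {l : ℝ} {k : Fin N} {m : ℕ}
    (hMp : ∀ n k j, 0 ≤ (M ^ n) k j) (hc : ∀ k, 0 < c k) (h : M.mulVec c = l • c)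
    (hm : ∀ j, 0 < (M ^ m) j k)
    (hdiag : ∀ n, (M ^ n) k k ≤ 1) : l ≤ 1 := by
  by_contra hl
  push_neg at hl
  have hNe : Nonempty (Fin N) := ⟨k⟩
  have hune : (Finset.univ : Finset (Fin N)).Nonempty := Finset.univ_nonempty
  set ε : ℝ := Finset.univ.inf' hune fun j => (M ^ m) j k with hε
  have hεpos : 0 < ε := by
    rw [hε, Finset.lt_inf'_iff]
    exact fun j _ => hm j
  set cmax : ℝ := Finset.univ.sup' hune c with hcm
  have hcle : ∀ j, c j ≤ cmax := fun j => Finset.le_sup' c (Finset.mem_univ j)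
  have key : ∀ n : ℕ, l ^ n ≤ cmax / (ε * c k) := by
    intro n
    set S : ℝ := ∑ j, (M ^ n) k j with hS
    have hS0 : 0 ≤ S := Finset.sum_nonneg fun j _ => hMp n k j
    have h1 : l ^ n * c k ≤ S * cmax := by
      have hv : ((M ^ n).mulVec c) k = l ^ n * c k := by rw [eig_pow h]; rfl
      simp only [Matrix.mulVec, dotProduct] at hv
      rw [← hv, hS, Finset.sum_mul]
      exact Finset.sum_le_sum fun j _ => mul_le_mul_of_nonneg_left (hcle j) (hMp n k j)
    have h2 : S * ε ≤ (M ^ (n + m)) k k := by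
      rw [pow_add, Matrix.mul_apply, hS, Finset.sum_mul]
      refine Finset.sum_le_sum fun j _ => mul_le_mul_of_nonneg_left ?_ (hMp n k j)
      exact Finset.inf'_le _ (Finset.mem_univ j)
    have h3 : (M ^ (n + m)) k k ≤ 1 := hdiag (n + m)
    have hck := hc k
    have hcmp : 0 < cmax := lt_of_lt_of_le (hc k) (hcle k)
    rw [le_div_iff₀ (mul_pos hεpos hck)]
    have h4 : ε * (l ^ n * c k) ≤ ε * (S * cmax) := mul_le_mul_of_nonneg_left h1 hεpos.le
    have h5 : (S * ε) * cmax ≤ 1 * cmax := mul_le_mul_of_nonneg_right (h2.trans h3) hcmp.le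
    nlinarith [h4, h5]
  obtain ⟨n, hn⟩ := pow_unbounded_of_one_lt (cmax / (ε * c k)) hl
  exact absurd (key n) (not_le.2 hn)


lemma continuous_FmatR_pow (hfin : ∀ z k j, q z k j ≠ ⊤) (hfs : FinSuppKer q)
    (n : ℕ) (k j : Fin N) : Continuous fun u : Fin d → ℝ => (FmatR q u ^ n) k j := by
  induction n generalizing k j with
  | zero =>
    have : (fun u : Fin d → ℝ => (FmatR q u ^ 0) k j)
        = fun _ => if k = j then (1:ℝ) else 0 := by
      funext u; rw [pow_zero, Matrix.one_apply]
    rw [this]; exact continuous_const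
  | succ n ih =>
    have : (fun u : Fin d → ℝ => (FmatR q u ^ (n + 1)) k j)
        = fun u => ∑ l, (FmatR q u ^ n) k l * FmatR q u l j := by
      funext u; rw [pow_succ, Matrix.mul_apply]
    rw [this]
    exact continuous_finset_sum _ fun l _ => (ih k l).mul (continuous_FmatR q hfin hfs l j)

end Stmt4Aux

open Stmt4Aux

/-- for a strongly irreducible, finitely supported, `ℤ^d`-invariant transition
kernel on `ℤ^d × {1,…,N}`, all entries of `F(u)` are finite for every `u`, and for any Perron
eigenvalue function `λ` (with positive right eigenvectors `C(u)`), the sublevel set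
`D = {u : λ(u) ≤ 1}` is compact. -/
theorem stmt4 {d N : ℕ} (hN : 0 < N) (q : (Fin d → ℤ) → Fin N → Fin N → ℝ≥0∞)
    (hfin : ∀ z k j, q z k j ≠ ⊤)
    (hfs : FinSuppKer q)
    (hirr : StronglyIrreducibleKer q)
    (lam : (Fin d → ℝ) → ℝ) (C : (Fin d → ℝ) → Fin N → ℝ)
    (heig : ∀ u : Fin d → ℝ, (∀ k, 0 < C u k) ∧ (FmatR q u).mulVec (C u) = lam u • C u) :
    (∀ (u : Fin d → ℝ) (k j : Fin N), Fmat q u k j ≠ ⊤) ∧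
    IsCompact {u : Fin d → ℝ | lam u ≤ 1} := by
  refine ⟨fun u k j => Fmat_ne_top q hfin hfs u k j, ?_⟩
  set k₀ : Fin N := ⟨0, hN⟩ with hk₀
  have hMp : ∀ (u : Fin d → ℝ) n k j, 0 ≤ (FmatR q u ^ n) k j :=
    fun u => FmatR_pow_nonneg q hfin hfs u
  -- a power of `M` with positive column `k₀`
  have hmex : ∀ u : Fin d → ℝ, ∃ m, ∀ j, 0 < (FmatR q u ^ m) j k₀ := by
    intro u
    refine ⟨Finset.univ.sup (fun j : Fin N => (hirr 0 j k₀).choose), fun j => ?_⟩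
    set m := Finset.univ.sup (fun j : Fin N => (hirr 0 j k₀).choose) with hm
    have h0 : 0 < convPow q m 0 j k₀ :=
      (hirr 0 j k₀).choose_spec m (Finset.le_sup (f := fun j : Fin N => (hirr 0 j k₀).choose) (Finset.mem_univ j))
    have hge := pow_entry_ge q hfin hfs u m 0 j k₀
    rw [dotZ_zero, Real.exp_zero, mul_one] at hge
    exact lt_of_lt_of_le
      (ENNReal.toReal_pos h0.ne' (convPow_ne_top q hfin hfs m 0 j k₀)) hge
  -- characterization of the sublevel set
  have hchar : ∀ u, lam u ≤ 1 ↔ ∀ n, (FmatR q u ^ n) k₀ k₀ ≤ 1 := by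
    intro u
    obtain ⟨hc, he⟩ := heig u
    constructor
    · intro hl n
      have hl0 : 0 ≤ lam u := lam_nonneg (fun k j => FmatR_nonneg q u k j) hc he k₀
      exact (diag_le_lam_pow (hMp u) hc he n k₀).trans (pow_le_one₀ hl0 hl)
    · intro hdiag
      obtain ⟨m, hm⟩ := hmex u
      exact lam_le_one (hMp u) hc he hm hdiag
  have hset : {u : Fin d → ℝ | lam u ≤ 1}
      = ⋂ n : ℕ, {u : Fin d → ℝ | (FmatR q u ^ n) k₀ k₀ ≤ 1} := by
    ext u
    simp only [Set.mem_setOf_eq, Set.mem_iInter, hchar u]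
  have hclosed : IsClosed {u : Fin d → ℝ | lam u ≤ 1} := by
    rw [hset]
    exact isClosed_iInter fun n =>
      isClosed_le (continuous_FmatR_pow q hfin hfs n k₀ k₀) continuous_const
  -- boundedness
  have hBex : ∀ z : Fin d → ℤ, ∃ B : ℝ, ∀ u : Fin d → ℝ, lam u ≤ 1 → dotZ u z ≤ B := by
    intro z
    obtain ⟨n₀, hn₀⟩ := hirr z k₀ k₀
    have hp : 0 < convPow q n₀ z k₀ k₀ := hn₀ n₀ le_rfl
    set cz := (convPow q n₀ z k₀ k₀).toReal with hczdef
    have hcz : 0 < cz := ENNReal.toReal_pos hp.ne' (convPow_ne_top q hfin hfs n₀ z k₀ k₀)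
    refine ⟨Real.log (1 / cz), fun u hu => ?_⟩
    have h1 : cz * Real.exp (dotZ u z) ≤ 1 :=
      le_trans (pow_entry_ge q hfin hfs u n₀ z k₀ k₀) ((hchar u).1 hu n₀)
    have h2 : Real.exp (dotZ u z) ≤ 1 / cz := by
      rw [le_div_iff₀ hcz]
      linarith
    calc dotZ u z = Real.log (Real.exp (dotZ u z)) := (Real.log_exp _).symm
      _ ≤ Real.log (1 / cz) := Real.log_le_log (Real.exp_pos _) h2
  choose B hB using hBex
  set zp : Fin d → (Fin d → ℤ) := fun i i' => if i' = i then 1 else 0 with hzp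
  set zm : Fin d → (Fin d → ℤ) := fun i i' => if i' = i then -1 else 0 with hzm
  have hdp : ∀ (u : Fin d → ℝ) (i : Fin d), dotZ u (zp i) = u i := by
    intro u i
    have h : ∀ i', u i' * (((if i' = i then 1 else 0 : ℤ)) : ℝ)
        = if i' = i then u i' else 0 := by intro i'; split <;> simp
    simp only [dotZ, hzp]
    rw [Finset.sum_congr rfl fun i' _ => h i']
    simp
  have hdm : ∀ (u : Fin d → ℝ) (i : Fin d), dotZ u (zm i) = -u i := by
    intro u i
    have h : ∀ i', u i' * (((if i' = i then -1 else 0 : ℤ)) : ℝ)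
        = if i' = i then -u i' else 0 := by intro i'; split <;> simp
    simp only [dotZ, hzm]
    rw [Finset.sum_congr rfl fun i' _ => h i']
    simp
  have hbdd : Bornology.IsBounded {u : Fin d → ℝ | lam u ≤ 1} := by
    set R : ℝ := (∑ i : Fin d, (|B (zp i)| + |B (zm i)|)) + 1 with hR
    have hR0 : (0:ℝ) ≤ R := by positivity
    refine (isBounded_iff_forall_norm_le).2 ⟨R, fun u hu => ?_⟩
    rw [pi_norm_le_iff_of_nonneg hR0]
    intro i
    rw [Real.norm_eq_abs, abs_le]
    have h1 : u i ≤ B (zp i) := by rw [← hdp u i]; exact hB (zp i) u hu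
    have h2 : -u i ≤ B (zm i) := by rw [← hdm u i]; exact hB (zm i) u hu
    have h3 : |B (zp i)| + |B (zm i)| ≤ ∑ i' : Fin d, (|B (zp i')| + |B (zm i')|) :=
      Finset.single_le_sum (f := fun i' : Fin d => |B (zp i')| + |B (zm i')|) (fun i' _ => by positivity) (Finset.mem_univ i)
    have h4 := le_abs_self (B (zp i))
    have h5 := le_abs_self (B (zm i))
    have h6 := abs_nonneg (B (zp i))
    have h7 := abs_nonneg (B (zm i))
    constructor <;> linarith
  exact Metric.isCompact_of_isClosed_isBounded hclosed hbdd
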